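/- Jacobi's formula for the Pfaffian: if A(t) is a skew-symmetric n×n matrix with polynomial entries over a commutative ℚ-algebra (n even), then d/dt pf(A(t)) = (1/2)·tr(A'(t) · Padj(A(t))), where derivatives are formal derivatives of polynomials. -/

import Mathlib

open Matrix Polynomial

namespace PaperPf

variable {R : Type*} [CommRing R]

/-- Position `2i`, the slot of the first element of the `i`-th pair. -/
def lo {m : ℕ} (i : Fin m) : Fin (2 * m) := ⟨2 * i.val, by have := i.isLt; omega⟩

/-- Position `2i+1`, the slot of the second element of the `i`-th pair. -/
def hi {m : ℕ} (i : Fin m) : Fin (2 * m) := ⟨2 * i.val + 1, by have := i.isLt; omega⟩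

/-- Permutations of `Fin (2m)` canonically encoding perfect matchings of
`{0,…,2m-1}`: the pairs are `{σ(2i), σ(2i+1)}`, each pair is listed with its
smaller element first, and pairs occur in increasing order of first elements.
The sign of the matching is the sign of this permutation. -/
def matchings (m : ℕ) : Finset (Equiv.Perm (Fin (2 * m))) :=
  Finset.univ.filter fun σ =>
    (∀ i : Fin m, σ (lo i) < σ (hi i)) ∧
    (∀ i j : Fin m, i < j → σ (lo i) < σ (lo j))

/-- The Pfaffian of a `2m × 2m` matrix, defined as the signed sum over all
perfect matchings of the products of the corresponding entries. -/
def pf {m : ℕ} (A : Matrix (Fin (2 * m)) (Fin (2 * m)) R) : R :=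
  ∑ σ ∈ matchings m,
    (Equiv.Perm.sign σ : ℤ) • ∏ i : Fin m, A (σ (lo i)) (σ (hi i))

end PaperPf

namespace PaperPf

variable {R : Type*} [CommRing R]

lemma card_compl_pair {m : ℕ} {i j : Fin (2 * (m + 1))} (h : ¬ i = j) :
    (({i, j}ᶜ : Finset (Fin (2 * (m + 1)))).card = 2 * m) := by
  rw [Finset.card_compl, Finset.card_insert_of_notMem (by simpa using h),
    Finset.card_singleton]
  simp only [Fintype.card_fin]
  omega

/-- The increasing enumeration of `{0,…,2(m+1)-1} \ {i,j}`. -/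
def delEmb {m : ℕ} (i j : Fin (2 * (m + 1))) (h : i ≠ j) :
    Fin (2 * m) → Fin (2 * (m + 1)) :=
  fun k => (({i, j}ᶜ : Finset (Fin (2 * (m + 1)))).orderIsoOfFin
    (card_compl_pair h) k : Fin (2 * (m + 1)))

/-- `A⟨i,j⟩`: the matrix obtained from `A` by deleting the `i`-th and `j`-th
rows and columns (junk value `0` if `i = j`). -/
def minor {m : ℕ} (A : Matrix (Fin (2 * (m + 1))) (Fin (2 * (m + 1))) R)
    (i j : Fin (2 * (m + 1))) : Matrix (Fin (2 * m)) (Fin (2 * m)) R :=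
  if h : i = j then 0
  else A.submatrix (delEmb i j h) (delEmb i j h)

/-- The Pfaff-adjugate matrix of `A`. -/
def Padj {m : ℕ} (A : Matrix (Fin (2 * (m + 1))) (Fin (2 * (m + 1))) R) :
    Matrix (Fin (2 * (m + 1))) (Fin (2 * (m + 1))) R :=
  fun i j =>
    if i = j then 0
    else if i < j then (-1 : R) ^ (i.val + j.val) * pf (minor A i j)
    else (-1 : R) ^ (i.val + j.val + 1) * pf (minor A i j)

end PaperPf

open PaperPf

/-! Differentiating each product in `pf A` by the Leibniz rule, the coefficient of `A' i j`
(`i < j`) is the signed sum, over the matchings containing the pair `{i, j}`, of the product of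
the entries on the remaining pairs. Removing that pair is a bijection onto the matchings of the
complement of `{i, j}` which changes the sign by `(-1) ^ (i + j + 1)`, so the coefficient is
`Padj A j i`. As `A'` and `Padj A` are both skew-symmetric, `tr (A' * Padj A)` counts every
pair `i < j` twice. -/

lemma Fin.val_cycleRange {n : ℕ} (i j : Fin n) :
    (Fin.cycleRange i j : ℕ) =
      if j < i then (j : ℕ) + 1 else if j = i then 0 else (j : ℕ) := by
  rcases lt_trichotomy j i with h | rfl | h
  · rw [if_pos h, Fin.coe_cycleRange_of_lt h]
  · simp [Fin.coe_cycleRange_of_le]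
  · rw [if_neg h.not_gt, if_neg h.ne', Fin.cycleRange_of_gt h]

lemma StrictMono.lt_card_filter_lt_iff {α : Type*} [LinearOrder α] {n : ℕ} {u : Fin n → α}
    (hu : StrictMono u) (a : α) (l : Fin n) :
    l.val < (Finset.univ.filter fun l' => u l' < a).card ↔ u l < a := by
  constructor
  · intro h
    by_contra hla
    have hsub : (Finset.univ.filter fun l' => u l' < a) ⊆ Finset.Iio l := fun l' hl' =>
      Finset.mem_Iio.2 (hu.lt_iff_lt.1 ((Finset.mem_filter.1 hl').2.trans_le (not_lt.1 hla)))
    have := Finset.card_le_card hsub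
    rw [Fin.card_Iio] at this
    omega
  · intro h
    have hsub : Finset.Iic l ⊆ Finset.univ.filter fun l' => u l' < a := fun l' hl' =>
      Finset.mem_filter.2 ⟨Finset.mem_univ _, (hu.monotone (Finset.mem_Iic.1 hl')).trans_lt h⟩
    have := Finset.card_le_card hsub
    rw [Fin.card_Iic] at this
    omega

lemma Fin.eq_of_forall_castSucc_lt_iff {n : ℕ} {a b : Fin (n + 1)}
    (h : ∀ l : Fin n, l.castSucc < a ↔ l.castSucc < b) : a = b := by
  wlog hab : a < b generalizing a b
  · rcases (not_lt.1 hab).lt_or_eq with hba | hba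
    · exact (this (fun l => (h l).symm) hba).symm
    · exact hba.symm
  have := h (a.castPred (Fin.ne_last_of_lt hab))
  rw [Fin.castSucc_castPred] at this
  exact absurd (this.2 hab) (lt_irrefl a)

lemma Fin.strictMono_of_strictMono_comp_succAbove {α : Type*} [LinearOrder α] {n : ℕ}
    {f : Fin (n + 1) → α} (k : Fin (n + 1)) (hf : StrictMono (f ∘ k.succAbove))
    (hlt : ∀ l, f (k.succAbove l) < f k ↔ k.succAbove l < k)
    (hne : ∀ l, f (k.succAbove l) ≠ f k) :
    StrictMono f := by
  intro p q hpq
  rcases eq_or_ne p k with rfl | hp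
  · obtain ⟨l, rfl⟩ := Fin.exists_succAbove_eq hpq.ne'
    exact (not_lt.1 fun h => ((hlt l).1 h).not_gt hpq).lt_of_ne (hne l).symm
  · obtain ⟨l, rfl⟩ := Fin.exists_succAbove_eq hp
    rcases eq_or_ne q k with rfl | hq
    · exact (hlt l).2 hpq
    · obtain ⟨l', rfl⟩ := Fin.exists_succAbove_eq hq
      exact hf (Fin.succAbove_lt_succAbove_iff.1 hpq)

lemma Fin.prod_univ_erase_eq_prod_succAbove {M : Type*} [CommMonoid M] {n : ℕ}
    (f : Fin (n + 1) → M) (k : Fin (n + 1)) :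
    ∏ l ∈ Finset.univ.erase k, f l = ∏ l, f (k.succAbove l) := by
  rw [← Finset.compl_singleton, ← Fin.image_succAbove_univ,
    Finset.prod_image fun _ _ _ _ h => Fin.succAbove_right_injective h]

lemma Fintype.sum_sum_eq_two_mul_sum_lt {ι α : Type*} [Fintype ι] [LinearOrder ι] [Semiring α]
    (f : ι → ι → α) (hsymm : ∀ i j, f j i = f i j) (hdiag : ∀ i, f i i = 0) :
    ∑ i, ∑ j, f i j = 2 * ∑ p : ι × ι with p.1 < p.2, f p.1 p.2 := by
  have hsplit : ∀ p : ι × ι, f p.1 p.2 =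
      (if p.1 < p.2 then f p.1 p.2 else 0) + (if p.2 < p.1 then f p.2 p.1 else 0) := by
    rintro ⟨i, j⟩
    rcases lt_trichotomy i j with h | rfl | h
    · simp [h, h.not_gt]
    · simp [hdiag]
    · simp [h, h.not_gt, hsymm]
  rw [← Fintype.sum_prod_type', Finset.sum_congr rfl fun p _ => hsplit p, Finset.sum_add_distrib,
    Fintype.sum_equiv (Equiv.prodComm ι ι) (fun p => if p.2 < p.1 then f p.2 p.1 else 0)
      (fun p => if p.1 < p.2 then f p.1 p.2 else 0) fun _ => rfl, Finset.sum_filter, two_mul]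

lemma Matrix.trace_mul_eq_two_mul_sum_lt_of_skew {n α : Type*} [Fintype n] [LinearOrder n]
    [CommRing α] {X Y : Matrix n n α} (hX : Xᵀ = -X) (hY : Yᵀ = -Y) (hYd : ∀ i, Y i i = 0) :
    (X * Y).trace = 2 * ∑ p : n × n with p.1 < p.2, X p.1 p.2 * Y p.2 p.1 := by
  have skew {Z : Matrix n n α} (hZ : Zᵀ = -Z) (i j : n) : Z j i = -Z i j := by
    rw [← transpose_apply Z i j, hZ, neg_apply]
  refine Fintype.sum_sum_eq_two_mul_sum_lt (fun i j => X i j * Y j i) (fun i j => ?_) (fun i => ?_)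
  · rw [skew hX, skew hY, neg_mul_neg]
  · rw [hYd, mul_zero]

namespace PaperPf

variable {R : Type*} [CommRing R] {m : ℕ}

@[simp]
lemma val_lo (k : Fin m) : (lo k).val = 2 * k.val := rfl

@[simp]
lemma val_hi (k : Fin m) : (hi k).val = 2 * k.val + 1 := rfl

lemma lo_lt_hi (k : Fin m) : lo k < hi k := by
  simp [Fin.lt_def]

lemma lo_injective : Function.Injective (lo : Fin m → Fin (2 * m)) := by
  intro a b h
  have := congrArg Fin.val h
  simp only [val_lo] at this
  exact Fin.ext (by omega)

lemma mem_matchings_iff {σ : Equiv.Perm (Fin (2 * m))} :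
    σ ∈ matchings m ↔ (∀ k, σ (lo k) < σ (hi k)) ∧ StrictMono fun k => σ (lo k) := by
  simp [matchings, StrictMono]

section SkipPair

variable {i j : Fin (2 * (m + 1))}

def skipPair (i j : Fin (2 * (m + 1))) (x : Fin (2 * m)) : Fin (2 * (m + 1)) :=
  ⟨if x.val < i.val then x.val else if x.val + 1 < j.val then x.val + 1 else x.val + 2, by
    have := x.isLt; split_ifs <;> omega⟩

lemma skipPair_strictMono : StrictMono (skipPair i j) := by
  intro x y (hxy : x.val < y.val)
  simp only [skipPair, Fin.mk_lt_mk]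
  split_ifs <;> omega

lemma skipPair_ne_left (hij : i < j) (x : Fin (2 * m)) : skipPair i j x ≠ i := by
  have : i.val < j.val := hij
  simp only [skipPair, Fin.ne_iff_vne]
  split_ifs <;> omega

lemma skipPair_ne_right (hij : i < j) (x : Fin (2 * m)) : skipPair i j x ≠ j := by
  have : i.val < j.val := hij
  simp only [skipPair, Fin.ne_iff_vne]
  split_ifs <;> omega

lemma delEmb_eq_skipPair {a b : Fin (2 * (m + 1))} (hab : a ≠ b) (hij : i < j)
    (hpair : ({a, b} : Finset (Fin (2 * (m + 1)))) = {i, j}) : delEmb a b hab = skipPair i j := by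
  funext x
  rw [delEmb, Finset.coe_orderIsoOfFin_apply,
    Finset.orderEmbOfFin_unique (card_compl_pair hab) (f := skipPair i j)
      (fun y => by simp [hpair, skipPair_ne_left hij, skipPair_ne_right hij]) skipPair_strictMono]

lemma minor_eq_submatrix (hij : i < j) (A : Matrix (Fin (2 * (m + 1))) (Fin (2 * (m + 1))) R) :
    minor A i j = A.submatrix (skipPair i j) (skipPair i j) := by
  rw [minor, dif_neg hij.ne, delEmb_eq_skipPair hij.ne hij rfl]

lemma minor_comm (A : Matrix (Fin (2 * (m + 1))) (Fin (2 * (m + 1))) R) (i j : Fin (2 * (m + 1))) :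
    minor A j i = minor A i j := by
  rcases lt_trichotomy i j with h | rfl | h
  · rw [minor_eq_submatrix h, minor, dif_neg h.ne',
      delEmb_eq_skipPair h.ne' h (Finset.pair_comm j i)]
  · rfl
  · rw [minor_eq_submatrix h, minor, dif_neg h.ne',
      delEmb_eq_skipPair h.ne' h (Finset.pair_comm i j)]

end SkipPair

section Padj

variable (A : Matrix (Fin (2 * (m + 1))) (Fin (2 * (m + 1))) R)

lemma Padj_apply_of_lt {i j : Fin (2 * (m + 1))} (hij : i < j) :
    Padj A j i = (-1 : R) ^ (i.val + j.val + 1) * pf (minor A i j) := by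
  rw [Padj, if_neg hij.ne', if_neg hij.not_gt, minor_comm, add_comm j.val]

lemma Padj_apply_self (i : Fin (2 * (m + 1))) : Padj A i i = 0 := if_pos rfl

lemma Padj_transpose : (Padj A)ᵀ = -Padj A := by
  ext i j
  rw [transpose_apply, neg_apply]
  rcases eq_or_ne i j with rfl | hne
  · rw [Padj_apply_self, neg_zero]
  · rcases hne.lt_or_gt with h | h <;>
      rw [Padj_apply_of_lt A h, Padj, if_neg h.ne, if_pos h, pow_succ] <;> ring

end Padj

section PairSumEquiv

variable {i j : Fin (2 * (m + 1))}

noncomputable def pairSumEquiv (i j : Fin (2 * (m + 1))) (hij : i < j) :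
    Fin 2 ⊕ Fin (2 * m) ≃ Fin (2 * (m + 1)) :=
  Equiv.ofBijective (Sum.elim ![i, j] (skipPair i j)) <| by
    rw [Fintype.bijective_iff_injective_and_card]
    refine ⟨Function.Injective.sumElim ?_ skipPair_strictMono.injective ?_, by simp; omega⟩
    · intro a b
      fin_cases a <;> fin_cases b <;> simp [hij.ne, hij.ne']
    · intro a x
      fin_cases a <;> simp [(skipPair_ne_left hij x).symm, (skipPair_ne_right hij x).symm]

@[simp]
lemma pairSumEquiv_inl_zero (hij : i < j) : pairSumEquiv i j hij (.inl 0) = i := rfl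

@[simp]
lemma pairSumEquiv_inl_one (hij : i < j) : pairSumEquiv i j hij (.inl 1) = j := rfl

@[simp]
lemma pairSumEquiv_inr (hij : i < j) (x : Fin (2 * m)) :
    pairSumEquiv i j hij (.inr x) = skipPair i j x := rfl

lemma sign_pairSumEquiv_symm_trans (hij : i < j) :
    Equiv.Perm.sign ((pairSumEquiv (lo 0) (hi 0) (lo_lt_hi 0)).symm.trans (pairSumEquiv i j hij)) =
      (-1) ^ (i.val + j.val + 1) := by
  set W := (pairSumEquiv (lo 0) (hi 0) (lo_lt_hi 0)).symm.trans (pairSumEquiv i j hij)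
  have hi1 : i.val + 1 < 2 * (m + 1) := by omega
  set c := Fin.cycleRange (⟨i.val + 1, hi1⟩ : Fin (2 * (m + 1))) * Fin.cycleRange j
  -- `W` moves `0, 1` to `i, j` keeping the other points in order; two cycles move them back.
  have hcW : c * W = 1 := by
    ext y
    obtain ⟨z, rfl⟩ := (pairSumEquiv (lo 0) (hi 0) (lo_lt_hi 0)).surjective y
    rw [Equiv.Perm.mul_apply, show W _ = pairSumEquiv i j hij z by simp [W]]
    have hij' : i.val < j.val := hij
    rcases z with a | x
    · fin_cases a <;>
        simp only [c, Equiv.Perm.mul_apply, Equiv.Perm.one_apply, Fin.ext_iff, Fin.lt_def,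
          Fin.val_cycleRange, lo, hi, Fin.zero_eta, Fin.isValue, pairSumEquiv_inl_zero,
          pairSumEquiv_inl_one, Fin.val_zero, Fin.mk_one] <;> split_ifs <;> omega
    · simp only [c, Equiv.Perm.mul_apply, Equiv.Perm.one_apply, Fin.ext_iff, Fin.lt_def,
        Fin.val_cycleRange, pairSumEquiv_inr, skipPair, lo, hi, Fin.val_zero]
      split_ifs <;> omega
  rw [eq_inv_of_mul_eq_one_right hcW, map_inv, map_mul, Fin.sign_cycleRange, Fin.sign_cycleRange,
    ← pow_add, Int.units_inv_eq_self, Nat.add_right_comm]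

end PairSumEquiv

lemma skipPair_lo_hi_apply_lo (k : Fin (m + 1)) (l : Fin m) :
    skipPair (lo k) (hi k) (lo l) = lo (k.succAbove l) := by
  have := val_lo l; have := val_lo k; have := val_hi k
  rcases lt_or_ge l.castSucc k with h | h
  · have : l.val < k.val := h
    rw [Fin.succAbove_of_castSucc_lt _ _ h, Fin.ext_iff, skipPair]
    split_ifs <;> simp only [val_lo, Fin.val_castSucc] <;> omega
  · have : k.val ≤ l.val := h
    rw [Fin.succAbove_of_le_castSucc _ _ h, Fin.ext_iff, skipPair]
    split_ifs <;> simp only [val_lo, Fin.val_succ] <;> omega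

lemma skipPair_lo_hi_apply_hi (k : Fin (m + 1)) (l : Fin m) :
    skipPair (lo k) (hi k) (hi l) = hi (k.succAbove l) := by
  have := val_hi l; have := val_lo k; have := val_hi k
  rcases lt_or_ge l.castSucc k with h | h
  · have : l.val < k.val := h
    rw [Fin.succAbove_of_castSucc_lt _ _ h, Fin.ext_iff, skipPair]
    split_ifs <;> simp only [val_hi, Fin.val_castSucc] <;> omega
  · have : k.val ≤ l.val := h
    rw [Fin.succAbove_of_le_castSucc _ _ h, Fin.ext_iff, skipPair]
    split_ifs <;> simp only [val_hi, Fin.val_succ] <;> omega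

section InsertPair

variable {i j : Fin (2 * (m + 1))} (hij : i < j)

/-- The matching `τ` of the complement of `{i, j}`, with `{i, j}` inserted as its `k`-th pair. -/
noncomputable def insertPairAt (k : Fin (m + 1)) (τ : Equiv.Perm (Fin (2 * m))) :
    Equiv.Perm (Fin (2 * (m + 1))) :=
  (pairSumEquiv (lo k) (hi k) (lo_lt_hi k)).symm.trans
    ((Equiv.sumCongr (Equiv.refl (Fin 2)) τ).trans (pairSumEquiv i j hij))

lemma insertPairAt_apply_pairSumEquiv (k : Fin (m + 1)) (τ : Equiv.Perm (Fin (2 * m)))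
    (z : Fin 2 ⊕ Fin (2 * m)) :
    insertPairAt hij k τ (pairSumEquiv (lo k) (hi k) (lo_lt_hi k) z) =
      pairSumEquiv i j hij (Equiv.sumCongr (Equiv.refl (Fin 2)) τ z) := by
  simp [insertPairAt]

lemma insertPairAt_injective (k : Fin (m + 1)) : Function.Injective (insertPairAt hij k) := by
  intro τ τ' h
  refine Equiv.ext fun x => ?_
  have := congrArg (· (pairSumEquiv (lo k) (hi k) (lo_lt_hi k) (.inr x))) h
  simp only [insertPairAt_apply_pairSumEquiv] at this
  simpa using (pairSumEquiv i j hij).injective this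

lemma exists_insertPairAt_eq {σ : Equiv.Perm (Fin (2 * (m + 1)))} {k : Fin (m + 1)}
    (hk : σ (lo k) = i) (hk' : σ (hi k) = j) : ∃ τ, insertPairAt hij k τ = σ := by
  set π : Equiv.Perm (Fin 2 ⊕ Fin (2 * m)) :=
    (pairSumEquiv (lo k) (hi k) (lo_lt_hi k)).trans (σ.trans (pairSumEquiv i j hij).symm)
  have hπ : ∀ a, π (.inl a) = .inl a := by
    intro a
    fin_cases a <;> simp [π, Equiv.symm_apply_eq, hk, hk']
  obtain ⟨⟨π₁, τ⟩, hπτ⟩ := Equiv.Perm.mem_sumCongrHom_range_of_perm_mapsTo_inl (σ := π) <| by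
    rintro _ ⟨a, rfl⟩
    exact ⟨a, (hπ a).symm⟩
  have hπ₁ : π₁ = Equiv.refl _ := by
    refine Equiv.ext fun a => ?_
    simpa [← hπτ] using hπ a
  refine ⟨τ, Equiv.ext fun x => ?_⟩
  obtain ⟨z, rfl⟩ := (pairSumEquiv (lo k) (hi k) (lo_lt_hi k)).surjective x
  rw [insertPairAt_apply_pairSumEquiv, ← hπ₁, show Equiv.sumCongr π₁ τ = π from hπτ]
  simp [π]

variable (k : Fin (m + 1)) (τ : Equiv.Perm (Fin (2 * m)))

@[simp]
lemma insertPairAt_lo : insertPairAt hij k τ (lo k) = i :=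
  insertPairAt_apply_pairSumEquiv hij k τ (.inl 0)

@[simp]
lemma insertPairAt_hi : insertPairAt hij k τ (hi k) = j :=
  insertPairAt_apply_pairSumEquiv hij k τ (.inl 1)

@[simp]
lemma insertPairAt_lo_succAbove (l : Fin m) :
    insertPairAt hij k τ (lo (k.succAbove l)) = skipPair i j (τ (lo l)) := by
  rw [← skipPair_lo_hi_apply_lo, ← pairSumEquiv_inr (lo_lt_hi k),
    insertPairAt_apply_pairSumEquiv]
  rfl

@[simp]
lemma insertPairAt_hi_succAbove (l : Fin m) :
    insertPairAt hij k τ (hi (k.succAbove l)) = skipPair i j (τ (hi l)) := by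
  rw [← skipPair_lo_hi_apply_hi, ← pairSumEquiv_inr (lo_lt_hi k),
    insertPairAt_apply_pairSumEquiv]
  rfl

lemma sign_insertPairAt :
    Equiv.Perm.sign (insertPairAt hij k τ) = (-1) ^ (i.val + j.val + 1) * Equiv.Perm.sign τ := by
  set e₀ := pairSumEquiv (lo (0 : Fin (m + 1))) (hi 0) (lo_lt_hi 0)
  set eₖ := pairSumEquiv (lo k) (hi k) (lo_lt_hi k)
  have hdecomp : insertPairAt hij k τ = e₀.symm.trans (pairSumEquiv i j hij) *
      (e₀.symm.trans eₖ)⁻¹ * eₖ.permCongr (Equiv.sumCongr (Equiv.refl (Fin 2)) τ) := by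
    ext x
    simp [insertPairAt, eₖ, Equiv.Perm.mul_apply, Equiv.Perm.inv_def]
  have hk : (lo k).val + (hi k).val + 1 = 2 * (2 * k.val + 1) := by
    simp only [val_lo, val_hi]; omega
  rw [hdecomp, map_mul, map_mul, map_inv, sign_pairSumEquiv_symm_trans,
    sign_pairSumEquiv_symm_trans, hk, pow_mul, Int.units_sq, one_pow, inv_one, mul_one,
    Equiv.Perm.sign_permCongr, Equiv.Perm.sign_sumCongr, Equiv.Perm.sign_refl, one_mul]

end InsertPair

section InsertSlot

variable {i j : Fin (2 * (m + 1))}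

/-- The position at which the pair `{i, j}` must be inserted into the matching `τ` of the
complement of `{i, j}` for the result to be listed in the order of `matchings`. -/
def insertSlot (i j : Fin (2 * (m + 1))) (τ : Equiv.Perm (Fin (2 * m))) : Fin (m + 1) :=
  ⟨(Finset.univ.filter fun l => skipPair i j (τ (lo l)) < i).card,
    Nat.lt_succ_of_le ((Finset.card_filter_le _ _).trans_eq (Finset.card_fin m))⟩

lemma castSucc_lt_insertSlot_iff {τ : Equiv.Perm (Fin (2 * m))} (hτ : τ ∈ matchings m)
    (l : Fin m) : l.castSucc < insertSlot i j τ ↔ skipPair i j (τ (lo l)) < i :=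
  (skipPair_strictMono.comp (mem_matchings_iff.1 hτ).2).lt_card_filter_lt_iff i l

variable (hij : i < j)

noncomputable def insertPair (τ : Equiv.Perm (Fin (2 * m))) : Equiv.Perm (Fin (2 * (m + 1))) :=
  insertPairAt hij (insertSlot i j τ) τ

lemma insertPair_mem_matchings {τ : Equiv.Perm (Fin (2 * m))} (hτ : τ ∈ matchings m) :
    insertPair hij τ ∈ matchings (m + 1) := by
  obtain ⟨hτ_pair, hτ_mono⟩ := mem_matchings_iff.1 hτ
  refine mem_matchings_iff.2 ⟨fun p => ?_, ?_⟩
  · rcases eq_or_ne p (insertSlot i j τ) with rfl | hp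
    · simpa [insertPair] using hij
    · obtain ⟨l, rfl⟩ := Fin.exists_succAbove_eq hp
      simpa [insertPair] using skipPair_strictMono (hτ_pair l)
  · refine Fin.strictMono_of_strictMono_comp_succAbove (insertSlot i j τ) (fun l l' hll' => ?_)
      (fun l => ?_) (fun l => ?_)
    · simpa [insertPair] using skipPair_strictMono (hτ_mono hll')
    · simp only [insertPair, insertPairAt_lo, insertPairAt_lo_succAbove,
        Fin.succAbove_lt_iff_castSucc_lt, castSucc_lt_insertSlot_iff hτ]
    · simpa [insertPair] using skipPair_ne_left hij _

lemma insertPair_injective : Function.Injective (insertPair hij) := by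
  intro τ τ' h
  have hslot : insertSlot i j τ = insertSlot i j τ' := by
    refine lo_injective ((insertPair hij τ).injective ?_)
    calc insertPair hij τ (lo (insertSlot i j τ)) = i := insertPairAt_lo hij _ τ
      _ = insertPair hij τ' (lo (insertSlot i j τ')) := (insertPairAt_lo hij _ τ').symm
      _ = insertPair hij τ (lo (insertSlot i j τ')) := by rw [h]
  rw [insertPair, insertPair, hslot] at h
  exact insertPairAt_injective hij _ h

lemma exists_insertPair_eq {σ : Equiv.Perm (Fin (2 * (m + 1)))} (hσ : σ ∈ matchings (m + 1))
    {k : Fin (m + 1)} (hk : σ (lo k) = i) (hk' : σ (hi k) = j) :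
    ∃ τ ∈ matchings m, insertSlot i j τ = k ∧ insertPair hij τ = σ := by
  obtain ⟨hσ_pair, hσ_mono⟩ := mem_matchings_iff.1 hσ
  obtain ⟨τ, rfl⟩ := exists_insertPairAt_eq hij hk hk'
  have hτ : τ ∈ matchings m := by
    refine mem_matchings_iff.2 ⟨fun l => ?_, fun l l' hll' => ?_⟩
    · have := hσ_pair (k.succAbove l)
      rw [insertPairAt_lo_succAbove, insertPairAt_hi_succAbove] at this
      exact skipPair_strictMono.lt_iff_lt.1 this
    · have := hσ_mono (Fin.strictMono_succAbove k hll')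
      simp only [insertPairAt_lo_succAbove] at this
      exact skipPair_strictMono.lt_iff_lt.1 this
  have hslot : insertSlot i j τ = k := by
    refine Fin.eq_of_forall_castSucc_lt_iff fun l => ?_
    have := hσ_mono.lt_iff_lt (a := k.succAbove l) (b := k)
    rw [hk, insertPairAt_lo_succAbove, Fin.succAbove_lt_iff_castSucc_lt] at this
    rw [castSucc_lt_insertSlot_iff hτ, this]
  exact ⟨τ, hτ, hslot, by rw [insertPair, hslot]⟩

end InsertSlot

theorem sum_matchings_through_pair {i j : Fin (2 * (m + 1))} (hij : i < j)
    (A : Matrix (Fin (2 * (m + 1))) (Fin (2 * (m + 1))) R) :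
    ∑ σ ∈ matchings (m + 1), ∑ k with (σ (lo k), σ (hi k)) = (i, j),
      (Equiv.Perm.sign σ : ℤ) • ∏ l ∈ Finset.univ.erase k, A (σ (lo l)) (σ (hi l)) =
      Padj A j i := by
  rw [Padj_apply_of_lt A hij, pf, Finset.mul_sum, Finset.sum_sigma']
  symm
  refine Finset.sum_bij (fun τ _ => ⟨insertPair hij τ, insertSlot i j τ⟩) (fun τ hτ => ?_)
    (fun τ _ τ' _ h => insertPair_injective hij (congrArg Sigma.fst h)) (fun ⟨σ, k⟩ h => ?_)
    (fun τ _ => ?_)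
  · simpa [insertPair] using insertPair_mem_matchings hij hτ
  · simp only [Finset.mem_sigma, Finset.mem_filter, Finset.mem_univ, true_and, Prod.mk.injEq] at h
    obtain ⟨τ, hτ, rfl, rfl⟩ := exists_insertPair_eq hij h.1 h.2.1 h.2.2
    exact ⟨τ, hτ, rfl⟩
  · rw [Fin.prod_univ_erase_eq_prod_succAbove, insertPair, sign_insertPairAt]
    simp only [minor_eq_submatrix hij, submatrix_apply, insertPairAt_lo_succAbove,
      insertPairAt_hi_succAbove]
    rw [Units.val_mul, mul_smul, zsmul_eq_mul, zsmul_eq_mul]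
    push_cast
    rfl

theorem derivative_pf_eq_sum_pairs (A : Matrix (Fin (2 * (m + 1))) (Fin (2 * (m + 1))) R[X]) :
    derivative (pf A) = ∑ p : Fin (2 * (m + 1)) × Fin (2 * (m + 1)) with p.1 < p.2,
      derivative (A p.1 p.2) * Padj A p.2 p.1 := by
  set pairs : Finset (Fin (2 * (m + 1)) × Fin (2 * (m + 1))) := {p | p.1 < p.2}
  have hterm : ∀ σ ∈ matchings (m + 1),
      derivative ((Equiv.Perm.sign σ : ℤ) • ∏ k, A (σ (lo k)) (σ (hi k))) =
        ∑ p ∈ pairs, ∑ k with (σ (lo k), σ (hi k)) = p,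
          derivative (A p.1 p.2) *
            (Equiv.Perm.sign σ : ℤ) • ∏ l ∈ Finset.univ.erase k, A (σ (lo l)) (σ (hi l)) := by
    intro σ hσ
    rw [map_zsmul, derivative_prod_finset, Finset.smul_sum,
      ← Finset.sum_fiberwise_of_maps_to (t := pairs) (g := fun k => (σ (lo k), σ (hi k)))
        fun k _ => by simpa [pairs] using (mem_matchings_iff.1 hσ).1 k]
    refine Finset.sum_congr rfl fun p _ => Finset.sum_congr rfl fun k hk => ?_
    obtain rfl := (Finset.mem_filter.1 hk).2
    exact (smul_mul_assoc _ _ _).symm.trans (mul_comm _ _)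
  rw [pf, map_sum, Finset.sum_congr rfl hterm, Finset.sum_comm]
  refine Finset.sum_congr rfl fun p hp => ?_
  rw [← sum_matchings_through_pair (Finset.mem_filter.1 hp).2, Finset.mul_sum]
  simp_rw [Finset.mul_sum]

end PaperPf

/-- Jacobi's formula for the Pfaffian: for a skew-symmetric
matrix `A(t)` with polynomial entries over a commutative `ℚ`-algebra,
`d/dt pf(A(t)) = (1/2)·tr(A'(t) · Padj(A(t)))`, with formal derivatives. -/
theorem derivative_pf {R : Type*} [CommRing R] [Algebra ℚ R] {m : ℕ}
    (A : Matrix (Fin (2 * (m + 1))) (Fin (2 * (m + 1))) (Polynomial R))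
    (hA : Aᵀ = -A) :
    Polynomial.derivative (pf A)
      = (2 : ℚ)⁻¹ • ((A.map (fun p => Polynomial.derivative p)) * Padj A).trace := by
  have half_smul_two_mul (x : R[X]) : (2 : ℚ)⁻¹ • (2 * x) = x := by
    rw [two_mul, ← two_smul ℚ x, smul_smul, inv_mul_cancel₀ two_ne_zero, one_smul]
  have hA' : (A.map fun p => derivative p)ᵀ = -A.map fun p => derivative p := by
    rw [← transpose_map, hA, Matrix.map_neg _ fun p => derivative_neg p]
  rw [Matrix.trace_mul_eq_two_mul_sum_lt_of_skew hA' (Padj_transpose A) (Padj_apply_self A),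
    derivative_pf_eq_sum_pairs, half_smul_two_mul]
  rfl
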